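/- arXiv:1802.03507 — 4 statements merged into one kernel-verified Lean document; each statement's English description precedes it below -/
import Mathlib

section
/- Let q and n be coprime positive integers. Then the number of necklaces of length n with q colors equals the number of functions f : Z/nZ → {0,1,...,q−1} such that ∑_{z ∈ Z/nZ} z·f(z) ≡ 0 (mod n); that is, |N(n,q)| = |F(n,q)|. -/
/-!
Both sides, multiplied by `n`, equal `∑ k : ZMod n, q ^ #{z | k * z = 0}`.

For necklaces this is Burnside's lemma: a function fixed by the rotation by `k` is a function on
`ZMod n ⧸ ⟨k⟩`, and this quotient has as many elements as the annihilator of `k`.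

For the other side, orthogonality of a primitive additive character `ψ` of `ZMod n` gives
`n · |F(n,q)| = ∑ₜ ∏_z ∑_{c < q} ψ(t z)^c`. The factor of `z` is `q` when `t z = 0`. Multiplication
by the unit `q` permutes the remaining `z` and raises `ψ(t z)` to its `q`-th power, so the product of
the remaining geometric sums `(ψ(t z)^q - 1) / (ψ(t z) - 1)` is `1`.
-/

/-- The cyclic-rotation equivalence on strings `ZMod n → Fin q`:
two strings are equivalent iff one is a cyclic rotation of the other.
Necklaces of length `n` with `q` colors are the equivalence classes. -/
def rotateSetoid (n q : ℕ) : Setoid (ZMod n → Fin q) where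
  r w w' := ∃ k : ZMod n, ∀ z, w' z = w (z + k)
  iseqv := by
    constructor
    · intro w
      exact ⟨0, fun z => by rw [add_zero]⟩
    · rintro w w' ⟨k, hk⟩
      exact ⟨-k, fun z => by rw [hk (z + -k)]; congr 1; ring⟩
    · rintro w w' w'' ⟨k, hk⟩ ⟨k', hk'⟩
      exact ⟨k + k', fun z => by rw [hk' z, hk (z + k')]; congr 1; ring⟩

open Finset Function

-- `G` acts on `G → α` by translation: `(k +ᵥ f) z = f (-k + z)`.
attribute [local instance] arrowAddAction

section Translation

variable {G α : Type*} [AddCommGroup G]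

def periodicEquivFunQuotient (c : G) :
    {f : G → α // Periodic f c} ≃ (G ⧸ AddSubgroup.zmultiples c → α) where
  toFun f := Quotient.lift f.1 fun a b hab => by
    obtain ⟨j, hj⟩ := AddSubgroup.mem_zmultiples_iff.1 (QuotientAddGroup.leftRel_apply.1 hab)
    rw [← f.2.zsmul j a, hj, add_neg_cancel_left]
  invFun g := ⟨g ∘ (↑), fun x => congrArg g <| QuotientAddGroup.eq.2 <| by simp⟩
  left_inv _ := rfl
  right_inv g := funext fun x => Quotient.inductionOn' x fun _ => rfl

lemma mem_fixedBy_arrow_iff_periodic {k : G} {f : G → α} :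
    f ∈ AddAction.fixedBy (G → α) k ↔ Periodic f (-k) := by
  rw [AddAction.mem_fixedBy, funext_iff]
  exact forall_congr' fun x => by rw [add_comm x]; rfl

lemma card_fixedBy_arrow [Finite G] (k : G) :
    Nat.card (AddAction.fixedBy (G → α) k) =
      Nat.card α ^ Nat.card (G ⧸ AddSubgroup.zmultiples k) :=
  calc Nat.card (AddAction.fixedBy (G → α) k)
      = Nat.card {f : G → α // Periodic f (-k)} :=
        Nat.card_congr (Equiv.subtypeEquivRight fun _ => mem_fixedBy_arrow_iff_periodic)
    _ = Nat.card (G ⧸ AddSubgroup.zmultiples (-k) → α) := Nat.card_congr (periodicEquivFunQuotient _)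
    _ = _ := by rw [Nat.card_fun, AddSubgroup.zmultiples_neg]

lemma card_orbitRel_quotient_arrow_mul_card [Fintype G] [Finite α] :
    Nat.card (AddAction.orbitRel.Quotient G (G → α)) * Nat.card G =
      ∑ k : G, Nat.card α ^ Nat.card (G ⧸ AddSubgroup.zmultiples k) := by
  classical
  have := Fintype.ofFinite α
  simp_rw [← card_fixedBy_arrow, Nat.card_eq_fintype_card]
  exact (AddAction.sum_card_fixedBy_eq_card_orbits_mul_card_addGroup G (G → α)).symm

end Translation

lemma AddChar.map_sum_eq_prod {A M ι : Type*} [AddCommMonoid A] [CommMonoid M]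
    (ψ : AddChar A M) (s : Finset ι) (g : ι → A) : ψ (∑ i ∈ s, g i) = ∏ i ∈ s, ψ (g i) := by
  simpa [← ofAdd_sum] using map_prod ψ.toMonoidHom (fun i => Multiplicative.ofAdd (g i)) s

lemma AddChar.sum_fun_fin_map_sum_mul_eq_prod_geom_sum {R M ι : Type*} [CommSemiring R]
    [CommSemiring M] [Fintype ι] [DecidableEq ι] (ψ : AddChar R M) (q : ℕ) (a : ι → R) :
    ∑ f : ι → Fin q, ψ (∑ i, a i * ((f i : ℕ) : R)) = ∏ i, ∑ c ∈ range q, ψ (a i) ^ c := by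
  simp_rw [← Fin.sum_univ_eq_sum_range, Fintype.prod_sum, ψ.map_sum_eq_prod, ← nsmul_eq_mul',
    ψ.map_nsmul_eq_pow]

lemma card_filter_eq_zero_mul_card_eq_sum_addChar {R K X : Type*} [CommRing R] [Fintype R]
    [DecidableEq R] [CommRing K] [IsDomain K] [Fintype X] {ψ : AddChar R K}
    (hψ : ψ.IsPrimitive) (s : X → R) :
    ((#{x | s x = 0} * Fintype.card R : ℕ) : K) = ∑ t, ∑ x, ψ (t * s x) := by
  rw [sum_comm]
  simp_rw [AddChar.sum_mulShift _ hψ]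
  rw [← Nat.cast_sum, sum_ite, sum_const, sum_const_zero, add_zero, smul_eq_mul]

theorem prod_geom_sum_eq_one_of_perm {K ι : Type*} [Field K] {s : Finset ι} (e : Equiv.Perm ι)
    (he : ∀ i, i ∈ s ↔ e i ∈ s) {g : ι → K} (hg : ∀ i ∈ s, g i ≠ 1) {q : ℕ}
    (hge : ∀ i, g (e i) = g i ^ q) :
    ∏ i ∈ s, ∑ c ∈ range q, g i ^ c = 1 := by
  have hD : ∏ i ∈ s, (g i - 1) ≠ 0 := prod_ne_zero_iff.2 fun i hi => sub_ne_zero.2 (hg i hi)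
  refine (mul_eq_right₀ hD).1 ?_
  calc (∏ i ∈ s, ∑ c ∈ range q, g i ^ c) * ∏ i ∈ s, (g i - 1)
      = ∏ i ∈ s, (g i ^ q - 1) := by
        rw [← prod_mul_distrib]
        exact prod_congr rfl fun i _ => geom_sum_mul _ _
    _ = ∏ i ∈ s, (g i - 1) := prod_equiv e he fun i _ => by rw [hge]

section ZMod

variable {n : ℕ}

lemma ZMod.zmultiples_eq_range_mulLeft (k : ZMod n) :
    AddSubgroup.zmultiples k = (AddMonoidHom.mulLeft k).range := by
  ext x
  simp only [AddSubgroup.mem_zmultiples_iff, AddMonoidHom.mem_range, AddMonoidHom.coe_mulLeft]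
  constructor
  · rintro ⟨j, rfl⟩
    exact ⟨j, by rw [zsmul_eq_mul, mul_comm]⟩
  · rintro ⟨z, rfl⟩
    exact ⟨z.cast, by rw [zsmul_eq_mul, ZMod.intCast_zmod_cast, mul_comm]⟩

lemma ZMod.card_quotient_zmultiples [NeZero n] (k : ZMod n) :
    Nat.card (ZMod n ⧸ AddSubgroup.zmultiples k) = Nat.card {z : ZMod n // k * z = 0} := by
  rw [zmultiples_eq_range_mulLeft]
  exact AddSubgroup.index_range

lemma rotateSetoid_eq_orbitRel (q : ℕ) :
    rotateSetoid n q = AddAction.orbitRel (ZMod n) (ZMod n → Fin q) := by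
  ext w w'
  simp only [AddAction.orbitRel_apply, AddAction.mem_orbit_iff, funext_iff]
  constructor
  · rintro ⟨k, hk⟩
    exact ⟨k, fun z => (hk _).trans (congrArg w (neg_add_cancel_comm k z))⟩
  · rintro ⟨k, hk⟩
    exact ⟨k, fun z => (congrArg w' (show z = -k + (z + k) by abel)).trans (hk _)⟩

theorem card_necklace_mul_eq_sum [NeZero n] (q : ℕ) :
    Nat.card (Quotient (rotateSetoid n q)) * n =
      ∑ k : ZMod n, q ^ Nat.card {z : ZMod n // k * z = 0} := by
  have burnside := card_orbitRel_quotient_arrow_mul_card (G := ZMod n) (α := Fin q)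
  simp only [ZMod.card_quotient_zmultiples, Nat.card_zmod, Nat.card_fin] at burnside
  rwa [rotateSetoid_eq_orbitRel]

theorem ZMod.prod_geom_sum_addChar_mul [NeZero n] {K : Type*} [Field K] {ψ : AddChar (ZMod n) K}
    (hψ : ψ.IsPrimitive) {q : ℕ} (hqn : q.Coprime n) (t : ZMod n) :
    ∏ z, ∑ c ∈ range q, ψ (t * z) ^ c = (q : K) ^ #{z | t * z = 0} := by
  rw [← prod_filter_mul_prod_filter_not univ (fun z => t * z = 0)]
  have hann : ∀ z ∈ ({z | t * z = 0} : Finset _), ∑ c ∈ range q, ψ (t * z) ^ c = q :=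
    fun z hz => by simp [(mem_filter.1 hz).2]
  set u := ZMod.unitOfCoprime q hqn
  have hrest : ∏ z ∈ univ with ¬t * z = 0, ∑ c ∈ range q, ψ (t * z) ^ c = 1 := by
    refine prod_geom_sum_eq_one_of_perm (Units.mulLeft u) (fun z => ?_)
      (fun z hz => (hψ.zmod_char_eq_one_iff n _).not.2 (mem_filter.1 hz).2) (fun z => ?_)
    · simp [mul_left_comm t]
    · rw [Units.mulLeft_apply, mul_left_comm, ZMod.coe_unitOfCoprime, ← nsmul_eq_mul,
        ψ.map_nsmul_eq_pow]
  rw [prod_congr rfl hann, prod_const, hrest, mul_one]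

theorem card_subsetSum_mul_eq_sum [NeZero n] (q : ℕ) (hqn : q.Coprime n) :
    Nat.card {f : ZMod n → Fin q // ∑ z : ZMod n, z * ((f z : ℕ) : ZMod n) = 0} * n =
      ∑ k : ZMod n, q ^ Nat.card {z : ZMod n // k * z = 0} := by
  have hζ := Complex.isPrimitiveRoot_exp n (NeZero.ne n)
  have hψ := AddChar.zmodChar_primitive_of_primitive_root n hζ
  set ψ := AddChar.zmodChar n ((IsPrimitiveRoot.iff_def _ n).mp hζ).left
  apply Nat.cast_injective (R := ℂ)
  simp only [Nat.card_eq_fintype_card, Fintype.card_subtype]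
  calc _ = ∑ t, ∑ f : ZMod n → Fin q, ψ (t * ∑ z, z * ((f z : ℕ) : ZMod n)) := by
        rw [← card_filter_eq_zero_mul_card_eq_sum_addChar hψ, ZMod.card]
    _ = ∑ t, ∏ z, ∑ c ∈ range q, ψ (t * z) ^ c := by
        refine sum_congr rfl fun t _ => ?_
        simpa only [AddChar.mulShift_apply, mul_sum, mul_assoc, id_eq] using
          (ψ.mulShift t).sum_fun_fin_map_sum_mul_eq_prod_geom_sum q id
    _ = _ := by
        push_cast
        exact sum_congr rfl fun t _ => ZMod.prod_geom_sum_addChar_mul hψ hqn t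

end ZMod

theorem necklace_card_eq_subsetSum_card_general
    (q n : ℕ) [NeZero n] (hqn : Nat.Coprime q n) :
    Nat.card (Quotient (rotateSetoid n q)) =
      Nat.card {f : ZMod n → Fin q // ∑ z : ZMod n, z * ((f z : ℕ) : ZMod n) = 0} :=
  Nat.eq_of_mul_eq_mul_right (Nat.pos_of_neZero n)
    ((card_necklace_mul_eq_sum q).trans (card_subsetSum_mul_eq_sum q hqn).symm)

/-- The number of necklaces of length `n` with `q` colors equals the number of
functions `f : ZMod n → {0,…,q-1}` with `∑ z, z·f(z) ≡ 0 (mod n)`,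
when `q` and `n` are coprime positive integers. -/
theorem necklace_card_eq_subsetSum_card
    (q n : ℕ) (hq : 0 < q) (hn : 0 < n) [NeZero n] (hqn : Nat.Coprime q n) :
    Nat.card (Quotient (rotateSetoid n q)) =
      Nat.card {f : ZMod n → Fin q // ∑ z : ZMod n, z * ((f z : ℕ) : ZMod n) = 0} :=
  necklace_card_eq_subsetSum_card_general q n hqn
end

section
/- Let n and d_1,...,d_k be positive integers. Then there exists an automorphism φ of the additive group ∏_{i=1}^k Z/(n/gcd(n,d_i))Z such that, writing h_i for the i-th coordinate of φ(1,...,1), one has d_1·h_1 + ... + d_k·h_k ≡ gcd(n, d_1, ..., d_k) (mod n). (Here each term d_i·h_i is a well-defined element of Z/nZ, since d_i · (n/gcd(n,d_i)) ≡ 0 (mod n).) -/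
/-!
Let `G = gcd(n, d₁, …, d_k)`, `L = n / G` and `qᵢ = dᵢ / G`. Every `mᵢ = n / gcd(n, dᵢ)` divides
`L`, so `A = ∏ ZMod mᵢ` is a `ZMod L`-module, `Ψ x = ∑ qᵢ xᵢ` is a well-defined linear form on it,
and the claim is `Ψ (φ 1) = 1`: multiplying by `G` identifies `ZMod L` with `G · ZMod n`.
Bezout gives `b` with `∑ bᵢ qᵢ = 1`, i.e. `Ψ b = 1` and `f 1 = 1` for `f x = ∑ bᵢ qᵢ xᵢ`.
The dilatransvection `x ↦ x + f x • s` sends `1` to `1 + s`; choosing `s` in the span of `b` and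
`1` with `Ψ (1 + s) = 1` leaves one free parameter, and since `ZMod L` has stable range one it can
be chosen so that `1 + f s` is a unit, which makes the map an automorphism.
-/

open Finset

def HasStableRangeOne (R : Type*) [CommRing R] : Prop :=
  ∀ a c : R, IsCoprime a c → ∃ t, IsUnit (a + t * c)

theorem ZMod.hasStableRangeOne (L : ℕ) [NeZero L] : HasStableRangeOne (ZMod L) := by
  classical
  intro a c hac
  -- every prime factor of `L` divides exactly one of `a.val` and `t`, and none divides both
  -- `a.val` and `c.val`
  let t := ∏ p ∈ L.primeFactors with ¬ p ∣ a.val, p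
  refine ⟨t, ?_⟩
  have hcast : a + t * c = ((a.val + t * c.val : ℕ) : ZMod L) := by
    push_cast; rw [ZMod.natCast_zmod_val, ZMod.natCast_zmod_val]
  rw [hcast, ZMod.isUnit_iff_coprime]
  refine Nat.coprime_of_dvd fun p hp hpx hpL => ?_
  by_cases hpa : p ∣ a.val
  · have hpt : ¬ p ∣ t := fun h => by
      obtain ⟨r, hr, hpr⟩ := (Prime.dvd_finsetProd_iff hp.prime _).mp h
      rw [mem_filter] at hr
      exact hr.2 ((Nat.prime_dvd_prime_iff_eq hp (Nat.prime_of_mem_primeFactors hr.1)).mp hpr ▸ hpa)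
    have hpc : p ∣ c.val := (hp.dvd_mul.mp ((Nat.dvd_add_right hpa).mp hpx)).resolve_left hpt
    have hmap := hac.map (ZMod.castHom hpL (ZMod p))
    rw [← ZMod.natCast_zmod_val a, ← ZMod.natCast_zmod_val c, map_natCast, map_natCast,
      (ZMod.natCast_eq_zero_iff _ _).mpr hpa, (ZMod.natCast_eq_zero_iff _ _).mpr hpc] at hmap
    have := Fact.mk hp
    exact not_isUnit_zero (isCoprime_zero_left.mp hmap)
  · have hpt : p ∣ t := dvd_prod_of_mem _ (by simp [hp, hpL, NeZero.ne L, hpa])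
    exact hpa ((Nat.dvd_add_left (hpt.mul_right _)).mp hpx)

theorem HasStableRangeOne.exists_linearEquiv_apply_eq_one {R M : Type*} [CommRing R]
    [AddCommGroup M] [Module R M] (hR : HasStableRangeOne R) (Ψ f : M →ₗ[R] R) {e b : M}
    (he : f e = 1) (hb : Ψ b = 1) : ∃ φ : M ≃ₗ[R] M, Ψ (φ e) = 1 := by
  -- `s` is chosen so that `Ψ (e + s) = 1`; `β` then makes `1 + f s` a unit
  obtain ⟨β, hβ⟩ := hR (1 + (1 - Ψ e) * f b) (1 - Ψ e * f b) ⟨Ψ e, 1 - Ψ e, by ring⟩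
  set s := (1 - Ψ e - β * Ψ e) • b + β • e
  have hfs : 1 + f s = 1 + (1 - Ψ e) * f b + β * (1 - Ψ e * f b) := by
    simp only [s, map_add, map_smul, he, smul_eq_mul]; ring
  refine ⟨LinearEquiv.dilatransvection (f := f) (v := s) (hfs ▸ hβ), ?_⟩
  rw [LinearEquiv.dilatransvection.apply, he, one_smul]
  simp only [s, map_add, map_smul, hb, smul_eq_mul]; ring

def ZMod.mulValHom {m N : ℕ} (c : ZMod N) (h : (m : ZMod N) * c = 0) : ZMod m →+ ZMod N :=
  ZMod.lift m ⟨zmultiplesHom (ZMod N) c, by simpa [mul_comm] using h⟩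

theorem ZMod.mulValHom_natCast {m N : ℕ} (c : ZMod N) (h : (m : ZMod N) * c = 0) (x : ℕ) :
    mulValHom c h x = c * x := by
  rw [← Int.cast_natCast, mulValHom, ZMod.lift_coe]; simp [mul_comm]

theorem ZMod.mulValHom_apply {m N : ℕ} [NeZero m] (c : ZMod N) (h : (m : ZMod N) * c = 0)
    (x : ZMod m) : mulValHom c h x = c * x.val := by
  rw [← mulValHom_natCast c h, ZMod.natCast_zmod_val]

theorem Finset.natCast_gcd {ι : Type*} (s : Finset ι) (f : ι → ℕ) :
    ((s.gcd f : ℕ) : ℤ) = s.gcd (fun i => (f i : ℤ)) := by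
  classical
  induction s using Finset.induction with
  | empty => simp
  | insert a s ha ih =>
    rw [gcd_insert, gcd_insert, ← ih, ← Int.coe_gcd, Int.gcd_natCast_natCast]; rfl

theorem exists_sum_mul_div_gcd_eq_one {ι : Type*} (s : Finset ι) (d : ι → ℕ) {n L : ℕ}
    (hn : 0 < n) (hL : n = n.gcd (s.gcd d) * L) :
    ∃ b : ι → ZMod L, ∑ i ∈ s, b i * (d i / n.gcd (s.gcd d) : ℕ) = 1 := by
  set G := n.gcd (s.gcd d)
  obtain ⟨c, hc⟩ := Finset.gcd_eq_sum_mul s (fun i => (d i : ℤ))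
  have hGd : ∀ i ∈ s, ((d i / G : ℕ) : ℤ) * G = d i := fun i hi => by
    exact_mod_cast Nat.div_mul_cancel ((Nat.gcd_dvd_right _ _).trans (Finset.gcd_dvd hi))
  have hG : (G : ℤ) ≠ 0 := by exact_mod_cast (Nat.gcd_pos_of_pos_left _ hn).ne'
  set A := n.gcdA (s.gcd d)
  set B := n.gcdB (s.gcd d)
  have key : ∑ i ∈ s, c i * B * (d i / G : ℕ) = 1 - (L : ℤ) * A := by
    refine mul_right_cancel₀ hG ?_
    calc (∑ i ∈ s, c i * B * (d i / G : ℕ)) * G = (s.gcd d : ℕ) * B := by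
          rw [sum_mul, Finset.natCast_gcd, hc, sum_mul]
          exact sum_congr rfl fun i hi => by rw [← hGd i hi]; ring
      _ = G - n * A := by rw [Nat.gcd_eq_gcd_ab n (s.gcd d)]; ring
      _ = (1 - L * A) * G := by rw [hL]; push_cast; ring
  refine ⟨fun i => ((c i * B : ℤ) : ZMod L), ?_⟩
  have := congrArg (Int.cast : ℤ → ZMod L) key
  simpa only [Int.cast_sum, Int.cast_mul, Int.cast_natCast, Int.cast_sub, Int.cast_one,
    ZMod.natCast_self, zero_mul, sub_zero] using this

theorem Nat.dvd_mul_div_gcd (n d : ℕ) : n ∣ d * (n / n.gcd d) := by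
  rw [← Nat.mul_div_assoc _ (Nat.gcd_dvd_left n d), mul_comm]
  exact Nat.dvd_lcm_left n d

theorem exists_addEquiv_sum_mul_val_eq_one {ι : Type*} [Fintype ι] {L : ℕ} [NeZero L]
    {m q : ι → ℕ} (hmL : ∀ i, m i ∣ L) (hqm : ∀ i, L ∣ q i * m i)
    (hq : ∃ b : ι → ZMod L, ∑ i, b i * q i = 1) :
    ∃ φ : (∀ i, ZMod (m i)) ≃+ (∀ i, ZMod (m i)),
      ((∑ i, q i * (φ (fun _ => 1) i).val : ℕ) : ZMod L) = 1 := by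
  obtain ⟨b, hb⟩ := hq
  have (i : ι) : NeZero (m i) := ⟨fun h => NeZero.ne L (Nat.eq_zero_of_zero_dvd (h ▸ hmL i))⟩
  -- kept opaque: only the module axioms are used
  have _ (i : ι) : Module (ZMod L) (ZMod (m i)) := AddCommGroup.zmodModule fun x => by
    rw [nsmul_eq_mul, (ZMod.natCast_eq_zero_iff _ _).mpr (hmL i), zero_mul]
  let ρ (i : ι) : ZMod (m i) →ₗ[ZMod L] ZMod L :=
    (ZMod.mulValHom (q i : ZMod L) (by
      rw [mul_comm]; exact_mod_cast (ZMod.natCast_eq_zero_iff _ _).mpr (hqm i))).toZModLinearMap L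
  have hρ (i : ι) (c : ZMod L) : ρ i (c • 1) = c * q i := by
    rw [map_smul, smul_eq_mul]
    simpa [ρ] using congrArg (c * ·) (ZMod.mulValHom_natCast (m := m i) (q i : ZMod L) _ 1)
  let Ψ : (∀ i, ZMod (m i)) →ₗ[ZMod L] ZMod L := ∑ i, ρ i ∘ₗ LinearMap.proj i
  let f : (∀ i, ZMod (m i)) →ₗ[ZMod L] ZMod L := ∑ i, b i • ρ i ∘ₗ LinearMap.proj i
  have hfe : f (fun _ => 1) = 1 := by simpa [f, ← hρ, one_smul] using hb
  have hΨb : Ψ (fun i => b i • 1) = 1 := by simpa [Ψ, hρ] using hb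
  obtain ⟨φ, hφ⟩ := (ZMod.hasStableRangeOne L).exists_linearEquiv_apply_eq_one Ψ f hfe hΨb
  exact ⟨φ.toAddEquiv, by simpa [Ψ, ρ, ZMod.mulValHom_apply] using hφ⟩

theorem exists_automorphism_bezout_general
    (n : ℕ) (hn : 0 < n) (k : ℕ) (d : Fin k → ℕ) :
    ∃ φ : (∀ i : Fin k, ZMod (n / Nat.gcd n (d i))) ≃+ (∀ i : Fin k, ZMod (n / Nat.gcd n (d i))),
      ∑ i : Fin k, (d i : ZMod n) * (((φ (fun _ => 1)) i).val : ZMod n) =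
        (Nat.gcd n (Finset.univ.gcd d) : ZMod n) := by
  set G := n.gcd (univ.gcd d)
  have hG : 0 < G := Nat.gcd_pos_of_pos_left _ hn
  have hGd (i : Fin k) : G ∣ d i := (Nat.gcd_dvd_right _ _).trans (gcd_dvd (mem_univ i))
  obtain ⟨L, hL⟩ : G ∣ n := Nat.gcd_dvd_left _ _
  have : NeZero L := ⟨by rintro rfl; omega⟩
  have hmL (i : Fin k) : n / n.gcd (d i) ∣ L := by
    refine (Nat.div_dvd_div_left (Nat.gcd_dvd_left _ _) (Nat.dvd_gcd ⟨L, hL⟩ (hGd i))).trans ?_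
    rw [hL, Nat.mul_div_cancel_left _ hG]
  have hqm (i : Fin k) : L ∣ d i / G * (n / n.gcd (d i)) := by
    refine Nat.dvd_of_mul_dvd_mul_left hG ?_
    rw [← hL, ← mul_assoc, Nat.mul_div_cancel' (hGd i)]
    exact Nat.dvd_mul_div_gcd n (d i)
  obtain ⟨φ, hφ⟩ :=
    exists_addEquiv_sum_mul_val_eq_one hmL hqm (exists_sum_mul_div_gcd_eq_one univ d hn hL)
  refine ⟨φ, ?_⟩
  have hsum : ∑ i, (d i : ZMod n) * ((φ (fun _ => 1) i).val : ZMod n) =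
      ((G * ∑ i, d i / G * (φ (fun _ => 1) i).val : ℕ) : ZMod n) := by
    simp only [mul_sum, ← mul_assoc, Nat.mul_div_cancel' (hGd _), Nat.cast_sum, Nat.cast_mul]
  rw [← Nat.cast_one, ZMod.natCast_eq_natCast_iff] at hφ
  rw [hsum, ZMod.natCast_eq_natCast_iff]
  simpa [← hL] using hφ.mul_left' G

/-- For positive integers `n` and `d 1, …, d k`, there is an automorphism `φ` of the
additive group `∏ i, ZMod (n / gcd(n, d i))` such that, with `h i` the `i`-th coordinate
of `φ (1,…,1)`, one has `∑ i, d i · h i ≡ gcd(n, d 1, …, d k) (mod n)`.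
Here each `d i · h i` is interpreted in `ZMod n` via the canonical representative
`(h i).val`, which is well defined since `d i · (n / gcd(n, d i)) ≡ 0 (mod n)`. -/
theorem exists_automorphism_bezout
    (n : ℕ) (hn : 0 < n) (k : ℕ) (d : Fin k → ℕ) (hd : ∀ i, 0 < d i) :
    ∃ φ : (∀ i : Fin k, ZMod (n / Nat.gcd n (d i))) ≃+ (∀ i : Fin k, ZMod (n / Nat.gcd n (d i))),
      ∑ i : Fin k, (d i : ZMod n) * (((φ (fun _ => 1)) i).val : ZMod n) =
        (Nat.gcd n (Finset.univ.gcd d) : ZMod n) :=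
  exists_automorphism_bezout_general n hn k d
end

section
/- Let q be a prime power and n a positive integer coprime to q, and let I ⊆ {1,...,m}. Then |N_I| = (gcd(n, gcd(s_i : i ∈ I))/n) · ∏_{i ∈ I} (q^{ℓ_i} − 1), where for I = ∅ the inner gcd is 0 and the empty product is 1. -/
/-!
Evaluation at the coset representatives `ω ^ s i` is an `F`-algebra map
`Q → ∏ i, F⟮ω ^ s i⟯`. It is injective: every `n`-th root of unity is a Frobenius conjugate
`(ω ^ s i) ^ q ^ j`, so a polynomial vanishing at all `ω ^ s i` is divisible by the separable
polynomial `X ^ n - 1`. Since `[F⟮ω ^ s i⟯ : F] = ℓ i` and the cosets partition `ZMod n`, both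
sides have `q ^ n` elements, so the map is bijective (the Chinese remainder isomorphism).
Through it, `P_i ∣ α` says that the `i`-th coordinate of `α` vanishes, so exactly
`∏ i ∈ I, (q ^ ℓ i - 1)` elements `α` satisfy `P_i ∣ α ↔ i ∉ I`, and multiplication by `X`
becomes multiplication by `(ω ^ s i)_i`. For such `α`, `X ^ k * α = α` iff `n ∣ s i * k` for
all `i ∈ I`, i.e. iff `n / gcd(n, gcd_{i ∈ I} s i) ∣ k`; so each of their orbits has exactly
that many elements.
-/

open Polynomial

/-- Two elements of a commutative monoid are rotation-equivalent w.r.t. `x` iff they lie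
in the same orbit under multiplication by `x` (stated symmetrically so that it is an
equivalence relation). For `Q = F[X]/(X^n-1)` and `x` the image of `X` (a unit),
the classes are exactly the orbits `{α, Xα, …, X^{n-1}α}`, i.e. necklaces. -/
def rotSetoid {R : Type*} [CommMonoid R] (x : R) : Setoid R where
  r a b := ∃ j k : ℕ, x ^ j * a = x ^ k * b
  iseqv := by
    refine ⟨fun a => ⟨0, 0, rfl⟩, ?_, ?_⟩
    · rintro a b ⟨j, k, h⟩
      exact ⟨k, j, h.symm⟩
    · rintro a b c ⟨j, k, h1⟩ ⟨j', k', h2⟩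
      refine ⟨j' + j, k + k', ?_⟩
      rw [pow_add, mul_assoc, h1, ← mul_assoc, ← pow_add, add_comm j' k, pow_add,
        mul_assoc, h2, ← mul_assoc, ← pow_add]

/-- `Q = F[X]/(X^n - 1)`. -/
abbrev Qring (F : Type) [Field F] (n : ℕ) := AdjoinRoot ((X : F[X]) ^ n - 1)

/-- The image of `X` in `Q`. -/
noncomputable def Xbar (F : Type) [Field F] (n : ℕ) : Qring F n := AdjoinRoot.root _

/-- The image in `Q` of the minimal polynomial over `F` of an element `x` of the
algebraic closure of `F`; for `x = ω^{s_i}` this is the element `P_i` of `Q`. -/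
noncomputable def Pbar (F : Type) [Field F] (n : ℕ) (x : AlgebraicClosure F) : Qring F n :=
  AdjoinRoot.mk _ (minpoly F x)

open IntermediateField Function

section FiniteField

variable {K L : Type*} [Field K] [Fintype K]

theorem aeval_pow_card_pow [CommRing L] [Algebra K L] (A : K[X]) (y : L) (j : ℕ) :
    aeval (y ^ Fintype.card K ^ j) A = aeval y A ^ Fintype.card K ^ j := by
  simpa [AlgHom.coe_pow, FiniteField.coe_frobeniusAlgHom, pow_iterate] using
    aeval_algHom_apply (FiniteField.frobeniusAlgHom K L ^ j) y A

theorem pow_card_pow_eq_self_iff [Field L] [Algebra K L] {x : L} (hx : IsIntegral K x) (l : ℕ) :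
    x ^ Fintype.card K ^ l = x ↔ (minpoly K x).natDegree ∣ l := by
  have : FiniteDimensional K K⟮x⟯ := adjoin.finiteDimensional hx
  have : Finite K⟮x⟯ := Module.finite_of_finite K
  have hσ (y : K⟮x⟯) :
      (FiniteField.frobeniusAlgHom K K⟮x⟯ ^ l) y = y ^ Fintype.card K ^ l := by
    simp [AlgHom.coe_pow, FiniteField.coe_frobeniusAlgHom, pow_iterate]
  -- The Frobenius of `K⟮x⟯` has order `[K⟮x⟯ : K]` and is determined by its value at `x`.
  rw [← adjoin.finrank hx, ← FiniteField.orderOf_frobeniusAlgHom K K⟮x⟯,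
    orderOf_dvd_iff_pow_eq_one]
  constructor
  · intro h
    refine adjoin_algHom_ext K fun y hy => ?_
    rw [Set.mem_singleton_iff] at hy
    subst hy
    ext
    simp [hσ, h]
  · intro h
    simpa [hσ] using congrArg (fun σ => (σ (AdjoinSimple.gen K x) : L)) h

theorem natDegree_minpoly_eq_of_isLeast [Field L] [Algebra K L] {x : L} (hx : IsIntegral K x)
    {ℓ : ℕ} (h : IsLeast {l | 0 < l ∧ x ^ Fintype.card K ^ l = x} ℓ) :
    (minpoly K x).natDegree = ℓ := by
  simp_rw [pow_card_pow_eq_self_iff hx] at h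
  have hd : IsLeast {l | 0 < l ∧ (minpoly K x).natDegree ∣ l} (minpoly K x).natDegree :=
    ⟨⟨minpoly.natDegree_pos hx, dvd_rfl⟩, fun l hl => Nat.le_of_dvd hl.1 hl.2⟩
  exact hd.unique h

theorem natCard_adjoin_simple [Field L] [Algebra K L] {x : L} (hx : IsIntegral K x) :
    Nat.card K⟮x⟯ = Fintype.card K ^ (minpoly K x).natDegree := by
  have : FiniteDimensional K K⟮x⟯ := adjoin.finiteDimensional hx
  rw [Module.natCard_eq_pow_finrank (K := K), adjoin.finrank hx, Nat.card_eq_fintype_card]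

theorem finite_adjoin_simple [Field L] [Algebra K L] {x : L} (hx : IsIntegral K x) :
    Finite K⟮x⟯ :=
  Nat.finite_of_card_ne_zero <| by
    rw [natCard_adjoin_simple hx]
    exact pow_ne_zero _ Fintype.card_ne_zero

end FiniteField

theorem IsPrimitiveRoot.pow_pow_eq_one {M : Type*} [CommMonoid M] {ω : M} {n : ℕ}
    (hω : IsPrimitiveRoot ω n) (a : ℕ) : (ω ^ a) ^ n = 1 := by
  rw [pow_right_comm, hω.pow_eq_one, one_pow]

section RootsOfUnity

variable {n : ℕ} [NeZero n]

theorem IsPrimitiveRoot.pow_eq_pow_iff_natCast_eq {M : Type*} [CommMonoid M] {ζ : M}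
    (h : IsPrimitiveRoot ζ n) {a b : ℕ} : ζ ^ a = ζ ^ b ↔ (a : ZMod n) = b := by
  rw [(h.isOfFinOrder (NeZero.ne n)).pow_eq_pow_iff_modEq, ← h.eq_orderOf,
    ZMod.natCast_eq_natCast_iff]

theorem X_pow_sub_one_dvd_of_forall_aeval_eq_zero {F L : Type*} [Field F] [Field L]
    [Algebra F L] {ζ : L} (hζ : IsPrimitiveRoot ζ n) {A : F[X]}
    (hA : ∀ z : L, z ^ n = 1 → aeval z A = 0) :
    X ^ n - 1 ∣ A := by
  rcases eq_or_ne A 0 with rfl | hA0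
  · exact dvd_zero _
  have hAL : A.map (algebraMap F L) ≠ 0 :=
    (Polynomial.map_ne_zero_iff (algebraMap F L).injective).2 hA0
  rw [← map_dvd_map' (algebraMap F L), Polynomial.map_sub, Polynomial.map_pow, map_X,
    Polynomial.map_one, ← C_1]
  refine (X_pow_sub_one_splits hζ).dvd_of_roots_le_roots (X_pow_sub_C_ne_zero (NeZero.pos n) 1)
    ((Multiset.le_iff_subset hζ.nthRoots_one_nodup).2 fun z hz => ?_)
  change z ∈ nthRoots n (1 : L) at hz
  rw [mem_nthRoots (NeZero.pos n)] at hz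
  rw [mem_roots hAL, IsRoot, eval_map, ← aeval_def]
  exact hA z hz

end RootsOfUnity

theorem Nat.dvd_mul_iff_div_gcd_dvd {n G : ℕ} (hn : 0 < n) (k : ℕ) :
    n ∣ G * k ↔ n / n.gcd G ∣ k := by
  have hd : 0 < n.gcd G := Nat.gcd_pos_of_pos_left G hn
  rw [← (Nat.coprime_div_gcd_div_gcd hd).dvd_mul_left]
  conv_rhs => rw [← Nat.mul_dvd_mul_iff_right hd, Nat.div_mul_cancel (Nat.gcd_dvd_left n G),
    mul_right_comm, Nat.div_mul_cancel (Nat.gcd_dvd_right n G)]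

theorem Finset.forall_dvd_mul_iff_div_gcd_dvd {ι : Type*} (I : Finset ι) (s : ι → ℕ)
    {n : ℕ} (hn : 0 < n) (k : ℕ) :
    (∀ i ∈ I, n ∣ s i * k) ↔ n / n.gcd (I.gcd s) ∣ k := by
  rw [← Nat.dvd_mul_iff_div_gcd_dvd hn, ← normalize_eq k, ← Finset.gcd_mul_right,
    Finset.dvd_gcd_iff, normalize_eq]

section PeriodicPts

variable {α : Type*} {f : α → α} {x : α}

theorem Function.minimalPeriod_eq_of_isLeast {l : ℕ}
    (h : IsLeast {k | 0 < k ∧ IsPeriodicPt f k x} l) : minimalPeriod f x = l :=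
  le_antisymm (h.1.2.minimalPeriod_le h.1.1)
    (h.2 ⟨minimalPeriod_pos_of_mem_periodicPts ⟨l, h.1⟩, isPeriodicPt_minimalPeriod f x⟩)

theorem Function.ncard_range_iterate (hx : x ∈ periodicPts f) :
    (Set.range fun j => f^[j] x).ncard = minimalPeriod f x := by
  have : (Set.range fun j => f^[j] x) = (fun j => f^[j] x) '' Set.Iio (minimalPeriod f x) := by
    refine (Set.image_subset_range _ _).antisymm' ?_
    rintro _ ⟨j, rfl⟩
    exact ⟨j % minimalPeriod f x, Nat.mod_lt _ (minimalPeriod_pos_of_mem_periodicPts hx),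
      iterate_mod_minimalPeriod_eq⟩
  rw [this, iterate_injOn_Iio_minimalPeriod.ncard_image, Set.ncard_Iio_nat]

theorem Function.sum_minimalPeriod_eq_natCard {ι : Type*} [Fintype ι] [Finite α] {s : ι → α}
    (hs : ∀ z, ∃! i, z ∈ Set.range fun j => f^[j] (s i))
    (hper : ∀ i, s i ∈ periodicPts f) :
    ∑ i, minimalPeriod f (s i) = Nat.card α := by
  choose c hc hcu using hs
  have hfiber (i : ι) : {z | c z = i} = Set.range fun j => f^[j] (s i) :=
    Set.ext fun z => ⟨by rintro rfl; exact hc z, fun hz => (hcu z i hz).symm⟩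
  rw [← Nat.card_congr (Equiv.sigmaFiberEquiv c), Nat.card_sigma]
  refine Finset.sum_congr rfl fun i _ => ?_
  rw [← ncard_range_iterate (hper i), ← hfiber i, ← Nat.card_coe_set_eq]
  rfl

theorem sum_isLeast_pow_mul_eq_natCard {M ι : Type*} [Monoid M] [Finite M] [Fintype ι] (u : M)
    {s : ι → M} {ℓ : ι → ℕ} (hs : ∀ z, ∃! i, ∃ j, z = u ^ j * s i)
    (hl : ∀ i, IsLeast {l | 0 < l ∧ u ^ l * s i = s i} (ℓ i)) :
    ∑ i, ℓ i = Nat.card M := by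
  have hℓ (i : ι) : minimalPeriod (u * ·) (s i) = ℓ i := by
    refine minimalPeriod_eq_of_isLeast ?_
    simpa only [IsPeriodicPt, IsFixedPt, mul_left_iterate_apply] using hl i
  have hs' (z : M) : ∃! i, z ∈ Set.range fun j => (u * ·)^[j] (s i) := by
    simpa only [Set.mem_range, mul_left_iterate_apply, eq_comm] using hs z
  rw [← sum_minimalPeriod_eq_natCard hs'
    fun i => minimalPeriod_pos_iff_mem_periodicPts.1 ((hℓ i).symm ▸ (hl i).1.1)]
  exact Finset.sum_congr rfl fun i _ => (hℓ i).symm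

end PeriodicPts

section Rotation

variable {R : Type*} [CommMonoid R] {x : R} {S : Set R}

theorem mem_and_rotSetoid_mk_eq_iff (hS : Set.MapsTo (x * ·) S S)
    (hper : ∀ b ∈ S, b ∈ periodicPts (x * ·)) {a b : R} (ha : a ∈ S) :
    b ∈ S ∧ Quotient.mk (rotSetoid x) b = Quotient.mk _ a ↔
      b ∈ Set.range fun j => (x * ·)^[j] a := by
  simp only [Set.mem_range, mul_left_iterate_apply]
  constructor
  · rintro ⟨hb, hba⟩
    obtain ⟨j, k, hjk⟩ := Quotient.exact hba
    obtain ⟨p, hp, hpb⟩ := hper b hb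
    have hpj : x ^ (p * j) * b = b := by
      simpa only [IsPeriodicPt, IsFixedPt, mul_left_iterate_apply] using hpb.mul_const j
    refine ⟨(p - 1) * j + k, ?_⟩
    -- `x ^ ((p - 1) * j)` undoes `x ^ j` on the periodic point `b`.
    calc x ^ ((p - 1) * j + k) * a = x ^ ((p - 1) * j) * (x ^ j * b) := by
          rw [hjk, pow_add, mul_assoc]
      _ = b := by
          rw [← mul_assoc, ← pow_add, ← add_one_mul, Nat.sub_one_add_one hp.ne', hpj]
  · rintro ⟨j, rfl⟩
    refine ⟨by simpa only [mul_left_iterate_apply] using hS.iterate j ha, Quotient.sound ?_⟩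
    exact ⟨0, j, by rw [pow_zero, one_mul]⟩

theorem natCard_rotClasses_mul (S : Set R) [Finite S] (hS : Set.MapsTo (x * ·) S S) {r : ℕ}
    (hr0 : 0 < r) (hr : ∀ a ∈ S, minimalPeriod (x * ·) a = r) :
    Nat.card {c : Quotient (rotSetoid x) | ∃ a, Quotient.mk _ a = c ∧ a ∈ S} * r =
      Nat.card S := by
  have hper (a : R) (ha : a ∈ S) : a ∈ periodicPts (x * ·) :=
    minimalPeriod_pos_iff_mem_periodicPts.1 (hr a ha ▸ hr0)
  set C := {c : Quotient (rotSetoid x) | ∃ a, Quotient.mk _ a = c ∧ a ∈ S}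
  let π : S → C := fun a => ⟨Quotient.mk _ a, a, rfl, a.2⟩
  have hπ : Surjective π := by
    rintro ⟨c, a, rfl, ha⟩
    exact ⟨⟨a, ha⟩, rfl⟩
  have : Finite C := Finite.of_surjective π hπ
  have : Fintype C := Fintype.ofFinite C
  have hfiber (c : C) : Nat.card {a // π a = c} = r := by
    obtain ⟨_, a, rfl, ha⟩ := c
    rw [← hr a ha, ← ncard_range_iterate (hper a ha), ← Nat.card_coe_set_eq]
    exact Nat.card_congr ((Equiv.subtypeEquivRight fun b => Subtype.ext_iff).trans
      ((Equiv.subtypeSubtypeEquivSubtypeInter (· ∈ S) _).trans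
        (Equiv.subtypeEquivRight fun b => mem_and_rotSetoid_mk_eq_iff hS hper ha)))
  rw [← Nat.card_congr (Equiv.sigmaFiberEquiv π), Nat.card_sigma,
    Finset.sum_congr rfl fun c _ => hfiber c, Finset.sum_const, Finset.card_univ, smul_eq_mul,
    Nat.card_eq_fintype_card]

end Rotation

theorem natCard_pi_eq_zero_iff_notMem {ι : Type*} [Fintype ι] {K : ι → Type*}
    [∀ i, Zero (K i)] [∀ i, Finite (K i)] (I : Finset ι) :
    Nat.card {v : ∀ i, K i // ∀ i, v i = 0 ↔ i ∉ I} = ∏ i ∈ I, (Nat.card (K i) - 1) := by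
  classical
  have hfactor (i : ι) :
      Nat.card {y : K i // y = 0 ↔ i ∉ I} = if i ∈ I then Nat.card (K i) - 1 else 1 := by
    split_ifs with hi
    · have : Nat.card {y : K i // y = 0 ↔ i ∉ I} = Nat.card ({0}ᶜ : Set (K i)) :=
        Nat.card_congr (Equiv.subtypeEquivRight fun y => by simp [hi])
      rw [this, Nat.card_coe_set_eq, Set.ncard_compl, Set.ncard_singleton]
    · rw [Nat.card_eq_one_iff_unique]
      exact ⟨⟨fun a b => Subtype.ext ((a.2.2 hi).trans (b.2.2 hi).symm)⟩,
        ⟨⟨0, by simp [hi]⟩⟩⟩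
  rw [Nat.card_congr (Equiv.subtypePiEquivPi (p := fun i (y : K i) => y = 0 ↔ i ∉ I)),
    Nat.card_pi, Finset.prod_congr rfl fun i _ => hfactor i, Finset.prod_ite_mem,
    Finset.univ_inter]

theorem pow_mul_eq_self_iff_of_injective {R ι G : Type*} [CommRing R] {K : ι → Type*}
    [∀ i, CommRing (K i)] [∀ i, IsDomain (K i)] [FunLike G R (∀ i, K i)]
    [RingHomClass G R (∀ i, K i)] {Φ : G} (hΦ : Injective Φ) (u a : R) (k : ℕ) :
    u ^ k * a = a ↔ ∀ i, Φ a i ≠ 0 → Φ u i ^ k = 1 := by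
  rw [← hΦ.eq_iff, map_mul, map_pow, funext_iff]
  refine forall_congr' fun i => ?_
  by_cases h : Φ a i = 0 <;> simp [h, mul_eq_right₀]

section Qring

variable {F : Type} [Field F] {n : ℕ} {L : Type*} [Field L] [Algebra F L]

theorem monic_X_pow_sub_one [NeZero n] : ((X : F[X]) ^ n - 1).Monic := by
  simpa using monic_X_pow_sub_C (1 : F) (NeZero.ne n)

instance [NeZero n] : Module.Finite F (Qring F n) :=
  (AdjoinRoot.powerBasis' monic_X_pow_sub_one).finite

theorem natCard_Qring [Fintype F] [NeZero n] : Nat.card (Qring F n) = Fintype.card F ^ n := by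
  rw [Module.natCard_eq_pow_finrank (K := F),
    (AdjoinRoot.powerBasis' monic_X_pow_sub_one).finrank, AdjoinRoot.powerBasis'_dim, ← C_1,
    natDegree_X_pow_sub_C, Nat.card_eq_fintype_card]

noncomputable def evalAdjoin (x : L) (hx : x ^ n = 1) : Qring F n →ₐ[F] F⟮x⟯ :=
  AdjoinRoot.liftAlgHom _ (Algebra.ofId F F⟮x⟯) (AdjoinSimple.gen F x) <| by
    apply Subtype.ext
    simp [hx]

theorem coe_evalAdjoin_mk (x : L) (hx : x ^ n = 1) (A : F[X]) :
    (evalAdjoin x hx (AdjoinRoot.mk _ A) : L) = aeval x A := by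
  simp [evalAdjoin, AdjoinRoot.liftAlgHom_mk, ← aeval_def]

theorem evalAdjoin_Xbar (x : L) (hx : x ^ n = 1) :
    evalAdjoin x hx (Xbar F n) = AdjoinSimple.gen F x :=
  AdjoinRoot.liftAlgHom_root ..

theorem Pbar_dvd_iff_evalAdjoin_eq_zero (x : AlgebraicClosure F) (hx : x ^ n = 1)
    (α : Qring F n) : Pbar F n x ∣ α ↔ evalAdjoin x hx α = 0 := by
  obtain ⟨A, rfl⟩ := AdjoinRoot.mk_surjective α
  rw [← ZeroMemClass.coe_eq_zero, coe_evalAdjoin_mk]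
  constructor
  · rintro ⟨β, hβ⟩
    simpa [Pbar, coe_evalAdjoin_mk] using
      congrArg (fun γ => (evalAdjoin x hx γ : AlgebraicClosure F)) hβ
  · intro h
    obtain ⟨C, hC⟩ := minpoly.dvd F x h
    exact ⟨AdjoinRoot.mk _ C, by rw [hC, Pbar, map_mul]⟩

end Qring

section EvalAtPowers

variable {F : Type} [Field F] {n : ℕ} {L : Type*} [Field L] [Algebra F L] {ω : L} {ι : Type*}

noncomputable def evalAtPowers (hω : IsPrimitiveRoot ω n) (s : ι → ℕ) :
    Qring F n →ₐ[F] ∀ i, F⟮ω ^ s i⟯ :=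
  AlgHom.pi fun i => evalAdjoin (ω ^ s i) (hω.pow_pow_eq_one (s i))

theorem evalAtPowers_Xbar (hω : IsPrimitiveRoot ω n) (s : ι → ℕ) (i : ι) :
    evalAtPowers (F := F) hω s (Xbar F n) i = AdjoinSimple.gen F (ω ^ s i) :=
  evalAdjoin_Xbar _ (hω.pow_pow_eq_one (s i))

theorem Pbar_dvd_iff_evalAtPowers_eq_zero {ω : AlgebraicClosure F} (hω : IsPrimitiveRoot ω n)
    (s : ι → ℕ) (i : ι) (α : Qring F n) :
    Pbar F n (ω ^ s i) ∣ α ↔ evalAtPowers hω s α i = 0 :=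
  Pbar_dvd_iff_evalAdjoin_eq_zero _ (hω.pow_pow_eq_one (s i)) α

variable [NeZero n]

theorem IsPrimitiveRoot.exists_eq_pow_pow_of_pow_eq_one (hω : IsPrimitiveRoot ω n) {q : ℕ}
    {s : ι → ℕ} (hs : ∀ z : ZMod n, ∃ i, ∃ j, z = (q : ZMod n) ^ j * s i) {z : L}
    (hz : z ^ n = 1) : ∃ i j, z = (ω ^ s i) ^ q ^ j := by
  obtain ⟨k, -, rfl⟩ := hω.eq_pow_of_pow_eq_one hz
  obtain ⟨i, j, hij⟩ := hs k
  refine ⟨i, j, ?_⟩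
  rw [← pow_mul, hω.pow_eq_pow_iff_natCast_eq, hij]
  push_cast
  ring

theorem IsPrimitiveRoot.isIntegral_pow (hω : IsPrimitiveRoot ω n) (a : ℕ) :
    IsIntegral F (ω ^ a) :=
  (hω.isIntegral (NeZero.pos n)).tower_top.pow a

theorem IsPrimitiveRoot.natCard_adjoin_pow [Fintype F] (hω : IsPrimitiveRoot ω n)
    {a ℓ : ℕ} (hl : IsLeast {l | 0 < l ∧ (Fintype.card F : ZMod n) ^ l * a = a} ℓ) :
    Nat.card F⟮ω ^ a⟯ = Fintype.card F ^ ℓ := by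
  rw [natCard_adjoin_simple (hω.isIntegral_pow a), natDegree_minpoly_eq_of_isLeast
    (hω.isIntegral_pow a)]
  simpa only [← pow_mul, hω.pow_eq_pow_iff_natCast_eq, Nat.cast_mul, Nat.cast_pow, mul_comm]
    using hl

theorem evalAtPowers_injective [Fintype F] (hω : IsPrimitiveRoot ω n) {s : ι → ℕ}
    (hs : ∀ z : ZMod n, ∃ i, ∃ j, z = (Fintype.card F : ZMod n) ^ j * s i) :
    Injective (evalAtPowers (F := F) hω s) := by
  refine (injective_iff_map_eq_zero _).2 fun α hα => ?_
  obtain ⟨A, rfl⟩ := AdjoinRoot.mk_surjective α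
  have hA (i : ι) : aeval (ω ^ s i) A = 0 := by
    simpa [evalAtPowers, coe_evalAdjoin_mk] using congrArg (fun v => (v i : L)) hα
  refine AdjoinRoot.mk_eq_zero.2 (X_pow_sub_one_dvd_of_forall_aeval_eq_zero hω fun z hz => ?_)
  obtain ⟨i, j, rfl⟩ := hω.exists_eq_pow_pow_of_pow_eq_one hs hz
  rw [aeval_pow_card_pow, hA i, zero_pow (pow_ne_zero _ Fintype.card_ne_zero)]

theorem evalAtPowers_bijective [Fintype F] [Fintype ι] (hω : IsPrimitiveRoot ω n)
    {s ℓ : ι → ℕ}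
    (hs : ∀ z : ZMod n, ∃! i, ∃ j, z = (Fintype.card F : ZMod n) ^ j * s i)
    (hl : ∀ i, IsLeast {l | 0 < l ∧ (Fintype.card F : ZMod n) ^ l * s i = s i} (ℓ i)) :
    Bijective (evalAtPowers (F := F) hω s) := by
  have (i : ι) : Finite F⟮ω ^ s i⟯ := finite_adjoin_simple (hω.isIntegral_pow (s i))
  refine (evalAtPowers_injective hω fun z => (hs z).exists).bijective_of_nat_card_le ?_
  rw [Nat.card_pi, natCard_Qring, ← Nat.card_zmod n,
    ← sum_isLeast_pow_mul_eq_natCard (Fintype.card F : ZMod n) hs hl,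
    ← Finset.prod_pow_eq_pow_sum]
  exact (Finset.prod_congr rfl fun i _ => hω.natCard_adjoin_pow (hl i)).le

theorem evalAtPowers_Xbar_mul_eq_zero_iff (hω : IsPrimitiveRoot ω n) (s : ι → ℕ)
    (α : Qring F n) (i : ι) :
    evalAtPowers hω s (Xbar F n * α) i = 0 ↔ evalAtPowers hω s α i = 0 := by
  have hX : evalAtPowers hω s (Xbar F n) i ≠ 0 := by
    rw [evalAtPowers_Xbar, Ne, ← ZeroMemClass.coe_eq_zero, AdjoinSimple.coe_gen]
    exact pow_ne_zero _ (hω.ne_zero (NeZero.ne n))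
  rw [map_mul, Pi.mul_apply, mul_eq_zero, or_iff_right hX]

theorem natCard_evalAtPowers_eq_zero_iff_notMem [Fintype F] [Fintype ι]
    (hω : IsPrimitiveRoot ω n) {s ℓ : ι → ℕ}
    (hs : ∀ z : ZMod n, ∃! i, ∃ j, z = (Fintype.card F : ZMod n) ^ j * s i)
    (hl : ∀ i, IsLeast {l | 0 < l ∧ (Fintype.card F : ZMod n) ^ l * s i = s i} (ℓ i))
    (I : Finset ι) :
    Nat.card {α : Qring F n // ∀ i, evalAtPowers hω s α i = 0 ↔ i ∉ I} =
      ∏ i ∈ I, (Fintype.card F ^ ℓ i - 1) := by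
  have (i : ι) : Finite F⟮ω ^ s i⟯ := finite_adjoin_simple (hω.isIntegral_pow (s i))
  rw [Nat.card_congr ((Equiv.ofBijective _ (evalAtPowers_bijective hω hs hl)).subtypeEquiv
    (p := fun α => ∀ i, evalAtPowers hω s α i = 0 ↔ i ∉ I)
    (q := fun v => ∀ i, v i = 0 ↔ i ∉ I) fun _ => Iff.rfl), natCard_pi_eq_zero_iff_notMem]
  exact Finset.prod_congr rfl fun i _ => by rw [hω.natCard_adjoin_pow (hl i)]

theorem minimalPeriod_Xbar_mul (hω : IsPrimitiveRoot ω n) {s : ι → ℕ}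
    (hΦ : Injective (evalAtPowers (F := F) hω s)) (I : Finset ι) {α : Qring F n}
    (hα : ∀ i, evalAtPowers hω s α i = 0 ↔ i ∉ I) :
    minimalPeriod (Xbar F n * ·) α = n / n.gcd (I.gcd s) := by
  have hperiodic (k : ℕ) : IsPeriodicPt (Xbar F n * ·) k α ↔ n / n.gcd (I.gcd s) ∣ k := by
    rw [IsPeriodicPt, IsFixedPt, mul_left_iterate_apply, pow_mul_eq_self_iff_of_injective hΦ,
      ← I.forall_dvd_mul_iff_div_gcd_dvd s (NeZero.pos n)]
    refine forall_congr' fun i => ?_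
    rw [Ne, hα, not_not, evalAtPowers_Xbar, ← hω.pow_eq_one_iff_dvd, pow_mul, Subtype.ext_iff]
    simp
  exact Nat.dvd_antisymm (isPeriodicPt_iff_minimalPeriod_dvd.1 ((hperiodic _).2 dvd_rfl))
    ((hperiodic _).1 (isPeriodicPt_minimalPeriod _ _))

end EvalAtPowers

theorem N_I_card_general
    (q n : ℕ) [NeZero n]
    (F : Type) [Field F] [Fintype F] (hF : Fintype.card F = q)
    (ω : AlgebraicClosure F) (hω : IsPrimitiveRoot ω n)
    (m : ℕ) (s : Fin m → ℕ) (ℓ : Fin m → ℕ)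
    (hS : ∀ z : ZMod n, ∃! i : Fin m, ∃ j : ℕ, z = (q : ZMod n) ^ j * (s i : ZMod n))
    (hl : ∀ i, IsLeast {l : ℕ | 0 < l ∧ (q : ZMod n) ^ l * (s i : ZMod n) = (s i : ZMod n)} (ℓ i))
    (I : Finset (Fin m)) :
    (Nat.card {c : Quotient (rotSetoid (Xbar F n)) |
        ∃ α : Qring F n, Quotient.mk (rotSetoid (Xbar F n)) α = c ∧
          ∀ i, (Pbar F n (ω ^ (s i)) ∣ α ↔ i ∉ I)} : ℚ) =
      (Nat.gcd n (I.gcd s) : ℚ) / (n : ℚ) * ∏ i ∈ I, ((q : ℚ) ^ (ℓ i) - 1) := by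
  subst hF
  simp only [Pbar_dvd_iff_evalAtPowers_eq_zero hω s]
  have : Finite (Qring F n) := Module.finite_of_finite F
  have hg0 : 0 < n.gcd (I.gcd s) := Nat.gcd_pos_of_pos_left _ (NeZero.pos n)
  have hcount : Nat.card {c : Quotient (rotSetoid (Xbar F n)) |
      ∃ α, Quotient.mk _ α = c ∧ ∀ i, evalAtPowers hω s α i = 0 ↔ i ∉ I} *
        (n / n.gcd (I.gcd s)) = ∏ i ∈ I, (Fintype.card F ^ ℓ i - 1) :=
    (natCard_rotClasses_mul {α | ∀ i, evalAtPowers hω s α i = 0 ↔ i ∉ I}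
      (fun α hα i => (evalAtPowers_Xbar_mul_eq_zero_iff hω s α i).trans (hα i))
      (Nat.div_pos (Nat.gcd_le_left _ (NeZero.pos n)) hg0)
      fun α hα => minimalPeriod_Xbar_mul hω (evalAtPowers_bijective hω hS hl).1 I hα).trans
    (natCard_evalAtPowers_eq_zero_iff_notMem hω hS hl I)
  have hprod : ((∏ i ∈ I, (Fintype.card F ^ ℓ i - 1) : ℕ) : ℚ) =
      ∏ i ∈ I, ((Fintype.card F : ℚ) ^ ℓ i - 1) := by
    rw [Nat.cast_prod]
    exact Finset.prod_congr rfl fun i _ => by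
      rw [Nat.cast_sub (Nat.one_le_pow _ _ Fintype.card_pos), Nat.cast_pow, Nat.cast_one]
  rw [← hprod, ← hcount, Nat.cast_mul, Nat.cast_div (Nat.gcd_dvd_left _ _) (by positivity)]
  field_simp [NeZero.ne n]

/-- For `q` a prime power coprime to `n` and `I ⊆ {1,…,m}`, the number of necklaces
(orbits of `Q = F_q[X]/(X^n-1)` under multiplication by `X`) whose elements are divisible
by `P_i` exactly for `i ∉ I` equals `(gcd(n, gcd(s_i : i ∈ I)) / n) · ∏_{i ∈ I} (q^{ℓ_i} - 1)`.
Here `s i` are representatives of the cyclotomic cosets (orbits of `z ↦ q·z` on `ZMod n`)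
and `ℓ i` is the least positive integer with `q^{ℓ i}·s_i ≡ s_i (mod n)`. -/
theorem N_I_card
    (q n : ℕ) (hq : IsPrimePow q) (hn : 0 < n) [NeZero n] (hqn : Nat.Coprime q n)
    (F : Type) [Field F] [Fintype F] (hF : Fintype.card F = q)
    (ω : AlgebraicClosure F) (hω : IsPrimitiveRoot ω n)
    (m : ℕ) (s : Fin m → ℕ) (ℓ : Fin m → ℕ)
    (hS : ∀ z : ZMod n, ∃! i : Fin m, ∃ j : ℕ, z = (q : ZMod n) ^ j * (s i : ZMod n))
    (hl : ∀ i, IsLeast {l : ℕ | 0 < l ∧ (q : ZMod n) ^ l * (s i : ZMod n) = (s i : ZMod n)} (ℓ i))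
    (I : Finset (Fin m)) :
    (Nat.card {c : Quotient (rotSetoid (Xbar F n)) |
        ∃ α : Qring F n, Quotient.mk (rotSetoid (Xbar F n)) α = c ∧
          ∀ i, (Pbar F n (ω ^ (s i)) ∣ α ↔ i ∉ I)} : ℚ) =
      (Nat.gcd n (I.gcd s) : ℚ) / (n : ℚ) * ∏ i ∈ I, ((q : ℚ) ^ (ℓ i) - 1) :=
  N_I_card_general q n F hF ω hω m s ℓ hS hl I
end

section
/- Let q and n be coprime positive integers, let I ⊆ {1,...,m}, and let g = gcd(n, gcd(s_i : i ∈ I)) (with the inner gcd equal to 0 when I = ∅). For c ∈ Z/nZ, let A_c be the set of functions f : Z/nZ → {0,1,...,q−1} such that (f takes the value q−1 on all of S_i if and only if i ∉ I) and ∑_{z ∈ Z/nZ} z·f(z) = c. Then |A_c| = (g/n) · ∏_{i ∈ I} (q^{ℓ_i} − 1) whenever c lies in the subgroup of Z/nZ generated by g, and |A_c| = 0 otherwise. -/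
/-!
Each cyclotomic coset is the orbit `{q ^ j * s i | j < ℓ i}`, so a function `f : ZMod n → Fin q`
is the same as a family of base-`q` numbers `N i = ∑ j, f (q ^ j * s i) * q ^ j < q ^ ℓ i`, and
then `∑ z, z * f z = ∑ i, N i * s i`. The function equals `q - 1` on the whole coset `S i` exactly
when `N i` is the top value `q ^ ℓ i - 1`, which contributes nothing since
`(q ^ ℓ i - 1) * s i = 0`. For `i ∈ I` the `N i` run through `Fin (q ^ ℓ i - 1)`, a group under
addition mod `q ^ ℓ i - 1` on which `N ↦ ∑ N i * s i` is a homomorphism to `ZMod n`. Its image is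
generated by `n.gcd (I.gcd s)`, and every fibre over the image has the size of the kernel.
-/

open scoped Classical

open Function Finset AddSubgroup

section Orbits

variable {R ι : Type*} [Monoid R] {u y : R} {l : ℕ}

lemma pow_mod_mul_eq (h : u ^ l * y = y) (j : ℕ) : u ^ (j % l) * y = u ^ j * y := by
  simpa [mul_left_iterate_apply] using
    (show IsPeriodicPt (u * ·) l y by simpa [IsPeriodicPt, IsFixedPt]).iterate_mod_apply j

lemma minimalPeriod_mul_left_eq (h : IsLeast {l | 0 < l ∧ u ^ l * y = y} l) :
    minimalPeriod (u * ·) y = l := by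
  have hper : ∀ k, IsPeriodicPt (u * ·) k y ↔ u ^ k * y = y := fun k => by
    simp [IsPeriodicPt, IsFixedPt]
  refine le_antisymm (((hper l).2 h.1.2).minimalPeriod_le h.1.1)
    (h.2 ⟨?_, (hper _).1 (isPeriodicPt_minimalPeriod _ _)⟩)
  exact minimalPeriod_pos_of_mem_periodicPts (mk_mem_periodicPts h.1.1 ((hper l).2 h.1.2))

lemma forall_exists_pow_mul_imp_iff (h : u ^ l * y = y) (hl : 0 < l) {P : R → Prop} :
    (∀ z, (∃ j : ℕ, z = u ^ j * y) → P z) ↔ ∀ j : Fin l, P (u ^ (j : ℕ) * y) :=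
  ⟨fun hP j => hP _ ⟨j, rfl⟩, fun hP _ ⟨j, hz⟩ =>
    hz ▸ pow_mod_mul_eq h j ▸ hP ⟨j % l, Nat.mod_lt _ hl⟩⟩

variable (u) (x : ι → R) (ℓ : ι → ℕ)

def orbitPoint (p : Σ i, Fin (ℓ i)) : R := u ^ (p.2 : ℕ) * x p.1

variable {u x ℓ}

theorem orbitPoint_bijective (hS : ∀ z, ∃! i, ∃ j : ℕ, z = u ^ j * x i)
    (hl : ∀ i, IsLeast {l | 0 < l ∧ u ^ l * x i = x i} (ℓ i)) :
    Bijective (orbitPoint u x ℓ) := by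
  constructor
  · rintro ⟨i, j⟩ ⟨i', j'⟩ h
    obtain rfl : i = i' := (hS _).unique ⟨j, rfl⟩ ⟨j', h⟩
    have hlt : ∀ k : Fin (ℓ i), (k : ℕ) ∈ Set.Iio (minimalPeriod (u * ·) (x i)) := fun k => by
      simp [minimalPeriod_mul_left_eq (hl i)]
    obtain rfl : j = j' := Fin.ext <| iterate_injOn_Iio_minimalPeriod (hlt j) (hlt j') <| by
      simpa [orbitPoint, mul_left_iterate_apply] using h
    rfl
  · intro z
    obtain ⟨i, ⟨j, rfl⟩, -⟩ := hS z
    exact ⟨⟨i, j % ℓ i, Nat.mod_lt _ (hl i).1.1⟩, pow_mod_mul_eq (hl i).1.2 j⟩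

end Orbits

lemma finFunctionFinEquiv_eq_pow_sub_one_iff {q ℓ : ℕ} (hq : 0 < q) (g : Fin ℓ → Fin q) :
    (finFunctionFinEquiv g : ℕ) = q ^ ℓ - 1 ↔ ∀ j, (g j : ℕ) = q - 1 := by
  let top : Fin q := ⟨q - 1, Nat.sub_lt hq one_pos⟩
  have htop : (finFunctionFinEquiv (fun _ : Fin ℓ => top) : ℕ) = q ^ ℓ - 1 := by
    rw [finFunctionFinEquiv_apply, Fin.sum_univ_eq_sum_range (fun j => (q - 1) * q ^ j),
      ← mul_sum, mul_comm, geom_sum_mul_of_one_le hq]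
  rw [← htop, ← Fin.ext_iff, finFunctionFinEquiv.apply_eq_iff_eq, funext_iff]
  exact forall_congr' fun j => Fin.ext_iff

section Digits

variable {R ι : Type*} [CommSemiring R] {q : ℕ} {x : ι → R} {ℓ : ι → ℕ}

noncomputable def orbitDigitsEquiv (h : Bijective (orbitPoint (q : R) x ℓ)) :
    (R → Fin q) ≃ ∀ i, Fin (q ^ ℓ i) :=
  ((Equiv.ofBijective _ h).symm.arrowCongr (Equiv.refl _)).trans
    ((Equiv.piCurry fun _ _ => Fin q).trans (Equiv.piCongrRight fun _ => finFunctionFinEquiv))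

lemma orbitDigitsEquiv_apply_val (h : Bijective (orbitPoint (q : R) x ℓ)) (f : R → Fin q)
    (i : ι) :
    (orbitDigitsEquiv h f i : ℕ) =
      ∑ j : Fin (ℓ i), (f ((q : R) ^ (j : ℕ) * x i) : ℕ) * q ^ (j : ℕ) :=
  rfl

lemma orbitDigitsEquiv_eq_pow_sub_one_iff (h : Bijective (orbitPoint (q : R) x ℓ)) (hq : 0 < q)
    (hl : ∀ i, 0 < ℓ i ∧ (q : R) ^ ℓ i * x i = x i) (f : R → Fin q) (i : ι) :
    (orbitDigitsEquiv h f i : ℕ) = q ^ ℓ i - 1 ↔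
      ∀ z, (∃ j : ℕ, z = (q : R) ^ j * x i) → (f z : ℕ) = q - 1 := by
  rw [forall_exists_pow_mul_imp_iff (hl i).2 (hl i).1]
  exact finFunctionFinEquiv_eq_pow_sub_one_iff hq _

lemma sum_mul_eq_sum_orbitDigitsEquiv [Fintype R] [Fintype ι]
    (h : Bijective (orbitPoint (q : R) x ℓ)) (f : R → Fin q) :
    ∑ z, z * ((f z : ℕ) : R) = ∑ i, ((orbitDigitsEquiv h f i : ℕ) : R) * x i := by
  rw [← (Equiv.ofBijective _ h).sum_comp, Fintype.sum_sigma]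
  refine sum_congr rfl fun i _ => ?_
  simp only [orbitDigitsEquiv_apply_val, Equiv.ofBijective_apply, orbitPoint, Nat.cast_sum,
    Nat.cast_mul, Nat.cast_pow, sum_mul]
  exact sum_congr rfl fun j _ => by ring

theorem card_eq_card_orbitDigits [Fintype R] [Fintype ι]
    (h : Bijective (orbitPoint (q : R) x ℓ)) (hq : 0 < q)
    (hl : ∀ i, 0 < ℓ i ∧ (q : R) ^ ℓ i * x i = x i) (I : Finset ι) (c : R) :
    Nat.card {f : R → Fin q //
        (∀ i, ((∀ z, (∃ j : ℕ, z = (q : R) ^ j * x i) → (f z : ℕ) = q - 1) ↔ i ∉ I)) ∧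
        ∑ z, z * ((f z : ℕ) : R) = c} =
      Nat.card {N : ∀ i, Fin (q ^ ℓ i) //
        (∀ i, ((N i : ℕ) = q ^ ℓ i - 1 ↔ i ∉ I)) ∧ ∑ i, ((N i : ℕ) : R) * x i = c} :=
  Nat.card_congr <| (orbitDigitsEquiv h).subtypeEquiv fun f => by
    simp only [orbitDigitsEquiv_eq_pow_sub_one_iff h hq hl, sum_mul_eq_sum_orbitDigitsEquiv h]

end Digits

section TopDigits

variable {ι : Type*} (I : Finset ι) (K : ι → ℕ)

noncomputable def piFinTopEquiv (hK : ∀ i, 0 < K i) :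
    {N : ∀ i, Fin (K i) // ∀ i, ((N i : ℕ) = K i - 1 ↔ i ∉ I)} ≃ ∀ i : I, Fin (K i - 1) where
  toFun N i := ⟨N.1 i, lt_of_le_of_ne (Nat.le_sub_one_of_lt (N.1 i).2) fun h => (N.2 i).1 h i.2⟩
  invFun y := ⟨fun i => if hi : i ∈ I then ⟨y ⟨i, hi⟩, (y ⟨i, hi⟩).2.trans_le (Nat.sub_le _ _)⟩
      else ⟨K i - 1, Nat.sub_lt (hK i) one_pos⟩,
    fun i => by by_cases hi : i ∈ I <;> simp [hi, (y ⟨i, _⟩).2.ne]⟩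
  left_inv N := by
    ext i
    by_cases hi : i ∈ I
    · simp [hi]
    · simp [hi, (N.2 i).2 hi]
  right_inv y := by
    ext i
    simp

theorem card_piFin_top_iff_sum_mul_eq {R : Type*} [Fintype ι] [Semiring R] (hK : ∀ i, 0 < K i)
    (s : ι → R) (hs : ∀ i ∉ I, ((K i - 1 : ℕ) : R) * s i = 0) (c : R) :
    Nat.card {N : ∀ i, Fin (K i) //
        (∀ i, ((N i : ℕ) = K i - 1 ↔ i ∉ I)) ∧ ∑ i, ((N i : ℕ) : R) * s i = c} =
      Nat.card {x : ∀ i : I, Fin (K i - 1) // ∑ i, ((x i : ℕ) : R) * s i = c} := by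
  refine Nat.card_congr <| (Equiv.subtypeSubtypeEquivSubtypeInter _ _).symm.trans <|
    (piFinTopEquiv I K hK).subtypeEquiv fun N => ?_
  change _ ↔ ∑ i : I, ((N.1 i : ℕ) : R) * s i = c
  rw [sum_coe_sort I fun i => ((N.1 i : ℕ) : R) * s i,
    sum_subset (subset_univ I) fun i _ hi => by rw [(N.2 i).2 hi, hs i hi]]

end TopDigits

lemma natCast_mod_mul_of_mul_eq_zero {R : Type*} [CommRing R] {M : ℕ} {s : R}
    (h : (M : R) * s = 0) (k : ℕ) : ((k % M : ℕ) : R) * s = k * s := by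
  conv_rhs => rw [← Nat.mod_add_div k M]
  push_cast
  linear_combination (-(k / M : ℕ) : R) * h

lemma AddSubgroup.natCast_gcd_mem {R : Type*} [AddGroupWithOne R] (H : AddSubgroup R) {a b : ℕ}
    (ha : (a : R) ∈ H) (hb : (b : R) ∈ H) : ((a.gcd b : ℕ) : R) ∈ H := by
  have hle : closure {(a : ℤ), (b : ℤ)} ≤ H.comap (Int.castAddHom R) :=
    (closure_le _).2 (by simp [Set.insert_subset_iff, ha, hb])
  have hgcd : ((a.gcd b : ℕ) : ℤ) ∈ closure {(a : ℤ), (b : ℤ)} := by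
    rw [Int.closure_eq_zmultiples, Int.gcd_natCast_natCast]
    exact mem_zmultiples _
  simpa using hle hgcd

lemma AddSubgroup.natCast_finsetGcd_mem {R ι : Type*} [AddGroupWithOne R] (H : AddSubgroup R)
    (J : Finset ι) (s : ι → ℕ) (h : ∀ i ∈ J, (s i : R) ∈ H) : ((J.gcd s : ℕ) : R) ∈ H := by
  induction J using Finset.induction_on with
  | empty => simp [H.zero_mem]
  | insert i J hi ih =>
    rw [gcd_insert]
    exact H.natCast_gcd_mem (h i (mem_insert_self i J))
      (ih fun j hj => h j (mem_insert_of_mem hj))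

lemma AddMonoidHom.card_fiber_mul_card_range {G H : Type*} [AddGroup G] [AddGroup H]
    (φ : G →+ H) (c : H) :
    Nat.card {x // φ x = c} * Nat.card φ.range = if c ∈ φ.range then Nat.card G else 0 := by
  split_ifs with hc
  · obtain ⟨a, rfl⟩ := hc
    rw [← index_ker, ← card_mul_index φ.ker]
    exact congrArg (· * _) (Nat.card_congr (φ.fiberEquivKer a))
  · have : IsEmpty {x // φ x = c} := ⟨fun x => hc ⟨x.1, x.2⟩⟩
    simp

section SumMul

variable {n : ℕ} {ι : Type*} (I : Finset ι) (M s : ι → ℕ)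

def finPiSumMulHom [∀ i : I, NeZero (M i)] (hMs : ∀ i ∈ I, (M i : ZMod n) * s i = 0) :
    (∀ i : I, Fin (M i)) →+ ZMod n where
  toFun x := ∑ i, ((x i : ℕ) : ZMod n) * s i
  map_zero' := by simp
  map_add' x y := by
    simp only [Pi.add_apply, Fin.val_add, natCast_mod_mul_of_mul_eq_zero (hMs _ (coe_mem _)),
      ← sum_add_distrib, Nat.cast_add, add_mul]

lemma range_finPiSumMulHom [∀ i : I, NeZero (M i)] (hMs : ∀ i ∈ I, (M i : ZMod n) * s i = 0) :
    (finPiSumMulHom I M s hMs).range = zmultiples ((n.gcd (I.gcd s) : ℕ) : ZMod n) := by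
  apply le_antisymm
  · rintro _ ⟨x, rfl⟩
    refine sum_mem fun i _ => ?_
    obtain ⟨t, ht⟩ := (Nat.gcd_dvd_right n _).trans (Finset.gcd_dvd (f := s) i.2)
    have : ((x i : ℕ) : ZMod n) * s i = (((x i * t : ℕ) : ℤ) : ZMod n) * (n.gcd (I.gcd s) : ℕ) := by
      rw [ht]; push_cast; ring
    exact this ▸ intCast_mul_mem_zmultiples _ _
  · refine zmultiples_le.2 (natCast_gcd_mem _ (by simp) (natCast_finsetGcd_mem _ _ _ ?_))
    intro i hi
    refine ⟨Pi.single ⟨i, hi⟩ 1, ?_⟩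
    change ∑ j, _ = _
    rw [Fintype.sum_eq_single ⟨i, hi⟩ fun j hj => by simp [Pi.single_eq_of_ne hj]]
    simpa [Fin.val_one'] using natCast_mod_mul_of_mul_eq_zero (hMs i hi) 1

theorem card_finPi_sum_mul_eq [NeZero n] (hMs : ∀ i ∈ I, (M i : ZMod n) * s i = 0) (c : ZMod n) :
    (Nat.card {x : ∀ i : I, Fin (M i) // ∑ i, ((x i : ℕ) : ZMod n) * s i = c} : ℚ) =
      if c ∈ zmultiples ((n.gcd (I.gcd s) : ℕ) : ZMod n) then
        (n.gcd (I.gcd s) : ℚ) / n * ∏ i ∈ I, (M i : ℚ)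
      else 0 := by
  by_cases hM : ∀ i : I, M i ≠ 0
  swap
  · obtain ⟨i, hi⟩ := not_forall_not.mp hM
    have : IsEmpty (∀ i : I, Fin (M i)) := ⟨fun x => (hi ▸ x i).elim0⟩
    simp [Finset.prod_eq_zero (f := fun i => (M i : ℚ)) i.2 (by simp [hi])]
  have : ∀ i : I, NeZero (M i) := fun i => ⟨hM i⟩
  have key := (finPiSumMulHom I M s hMs).card_fiber_mul_card_range c
  change Nat.card {x : ∀ i : I, Fin (M i) // ∑ i, ((x i : ℕ) : ZMod n) * s i = c} * _ = _ at key
  rw [range_finPiSumMulHom, Nat.card_zmultiples, ZMod.addOrderOf_coe _ (NeZero.ne n),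
    Nat.gcd_gcd_self_right_left, Nat.card_pi] at key
  simp only [Nat.card_fin, prod_coe_sort I M] at key
  have hg : n.gcd (I.gcd s) ∣ n := Nat.gcd_dvd_left _ _
  have hg0 : (n.gcd (I.gcd s) : ℚ) ≠ 0 := by
    simpa using (Nat.gcd_pos_of_pos_left _ (NeZero.pos n)).ne'
  have hn0 : (n : ℚ) ≠ 0 := by simpa using NeZero.ne n
  have key' := congrArg (Nat.cast : ℕ → ℚ) key
  push_cast [Nat.cast_div hg hg0] at key'
  split_ifs at key' ⊢
  · rw [← key']
    field_simp
  · simpa [hn0, hg0] using key'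

end SumMul

theorem A_c_card_general
    (q n : ℕ) (hq : 0 < q) [NeZero n]
    (m : ℕ) (s : Fin m → ℕ) (ℓ : Fin m → ℕ)
    (hS : ∀ z : ZMod n, ∃! i : Fin m, ∃ j : ℕ, z = (q : ZMod n) ^ j * (s i : ZMod n))
    (hl : ∀ i, IsLeast {l : ℕ | 0 < l ∧ (q : ZMod n) ^ l * (s i : ZMod n) = (s i : ZMod n)} (ℓ i))
    (I : Finset (Fin m)) (c : ZMod n) :
    (Nat.card {f : ZMod n → Fin q //
        (∀ i, ((∀ z : ZMod n,
            (∃ j : ℕ, z = (q : ZMod n) ^ j * (s i : ZMod n)) → (f z : ℕ) = q - 1)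
          ↔ i ∉ I)) ∧
        ∑ z : ZMod n, z * ((f z : ℕ) : ZMod n) = c} : ℚ) =
      if c ∈ AddSubgroup.zmultiples ((Nat.gcd n (I.gcd s) : ZMod n)) then
        (Nat.gcd n (I.gcd s) : ℚ) / (n : ℚ) * ∏ i ∈ I, ((q : ℚ) ^ (ℓ i) - 1)
      else 0 := by
  have hcycle : ∀ i, ((q ^ ℓ i - 1 : ℕ) : ZMod n) * s i = 0 := fun i => by
    rw [Nat.cast_sub (Nat.one_le_pow _ _ hq), Nat.cast_pow, sub_mul, (hl i).1.2, Nat.cast_one,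
      one_mul, sub_self]
  rw [card_eq_card_orbitDigits (orbitPoint_bijective hS hl) hq (fun i => (hl i).1),
    card_piFin_top_iff_sum_mul_eq I _ (fun i => pow_pos hq _) _ (fun i _ => hcycle i),
    card_finPi_sum_mul_eq I _ _ (fun i _ => hcycle i)]
  congr 2
  exact prod_congr rfl fun i _ => by
    rw [Nat.cast_sub (Nat.one_le_pow _ _ hq), Nat.cast_pow, Nat.cast_one]

/-- For coprime positive integers `q` and `n`, `I ⊆ {1,…,m}`, `g = gcd(n, gcd(s_i : i ∈ I))`
and `c ∈ ZMod n`, the number of functions `f : ZMod n → {0,…,q-1}` taking the value `q-1`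
on all of `S_i` exactly for `i ∉ I` and with `∑ z, z·f(z) = c` is
`(g/n)·∏_{i ∈ I}(q^{ℓ_i}-1)` if `c` lies in the subgroup of `ZMod n` generated by `g`,
and `0` otherwise. Here `S_i = {q^j·s_i : j ∈ ℕ}` are the cyclotomic cosets (orbits of
`z ↦ q·z` on `ZMod n`), with representatives `s i` and sizes `ℓ i` (the least positive
integer with `q^{ℓ i}·s_i ≡ s_i (mod n)`). -/
theorem A_c_card
    (q n : ℕ) (hq : 0 < q) (hn : 0 < n) [NeZero n] (hqn : Nat.Coprime q n)
    (m : ℕ) (s : Fin m → ℕ) (ℓ : Fin m → ℕ)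
    (hS : ∀ z : ZMod n, ∃! i : Fin m, ∃ j : ℕ, z = (q : ZMod n) ^ j * (s i : ZMod n))
    (hl : ∀ i, IsLeast {l : ℕ | 0 < l ∧ (q : ZMod n) ^ l * (s i : ZMod n) = (s i : ZMod n)} (ℓ i))
    (I : Finset (Fin m)) (c : ZMod n) :
    (Nat.card {f : ZMod n → Fin q //
        (∀ i, ((∀ z : ZMod n,
            (∃ j : ℕ, z = (q : ZMod n) ^ j * (s i : ZMod n)) → (f z : ℕ) = q - 1)
          ↔ i ∉ I)) ∧
        ∑ z : ZMod n, z * ((f z : ℕ) : ZMod n) = c} : ℚ) =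
      if c ∈ AddSubgroup.zmultiples ((Nat.gcd n (I.gcd s) : ZMod n)) then
        (Nat.gcd n (I.gcd s) : ℚ) / (n : ℚ) * ∏ i ∈ I, ((q : ℚ) ^ (ℓ i) - 1)
      else 0 :=
  A_c_card_general q n hq m s ℓ hS hl I c
end
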